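/- For any (a,b) ∈ ℝ², ∫ ‖x − (a,b)‖² dP(x) = 7/32 + ‖(1/2,3/4) − (a,b)‖². -/

import Mathlib

open MeasureTheory ProbabilityTheory
open scoped ENNReal

noncomputable section

abbrev E2 : Type := EuclideanSpace ℝ (Fin 2)

/-- The point (a,b) of the Euclidean plane. -/
def pt (a b : ℝ) : E2 := (WithLp.equiv 2 (Fin 2 → ℝ)).symm ![a, b]

/-- The four generating similarities S₁,…,S₄ (indexed 0,…,3) of the Sierpiński carpet. -/
def S : Fin 4 → E2 → E2
  | 0 => fun x => pt (x 0 / 3) (x 1 / 3)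
  | 1 => fun x => pt (x 0 / 3 + 2/3) (x 1 / 3)
  | 2 => fun x => pt (x 0 / 3) (x 1 / 3 + 2/3)
  | 3 => fun x => pt (x 0 / 3 + 2/3) (x 1 / 3 + 2/3)

/-- The self-affinity equation P = (1/8)P∘S₁⁻¹ + (1/8)P∘S₂⁻¹ + (3/8)P∘S₃⁻¹ + (3/8)P∘S₄⁻¹. -/
def carpetEq (P : Measure E2) : Prop :=
  P = (1/8 : ℝ≥0∞) • P.map (S 0) + (1/8 : ℝ≥0∞) • P.map (S 1)
    + (3/8 : ℝ≥0∞) • P.map (S 2) + (3/8 : ℝ≥0∞) • P.map (S 3)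

/-- The unit square [0,1]². -/
def unitSq : Set E2 := {x | ∀ i, x i ∈ Set.Icc (0:ℝ) 1}

/-- S_ω = S_{ω₁} ∘ ⋯ ∘ S_{ω_k} for a word ω. -/
def Sw (w : List (Fin 4)) : E2 → E2 := fun x => w.foldr S x

/-- The basic square J_ω = S_ω([0,1]²). -/
def Jw (w : List (Fin 4)) : Set E2 := Sw w '' unitSq

/-- The basic square J_i of the first level. -/
def Jset (i : Fin 4) : Set E2 := S i '' unitSq

/-- The mass centroid (conditional expectation) of P on a set A. -/
def ctr (P : Measure E2) (A : Set E2) : E2 := (P A).toReal⁻¹ • ∫ x in A, x ∂P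

/-- E(ω) : distortion error on J_ω about its centroid a(ω) = S_ω(1/2,3/4). -/
def Err (P : Measure E2) (w : List (Fin 4)) : ℝ :=
  ∫ x in Jw w, ‖x - Sw w (pt (1/2) (3/4))‖^2 ∂P

/-- E(ωi, ωj) : distortion error on J_{ωi} ∪ J_{ωj} about its centroid. -/
def Epair (P : Measure E2) (w : List (Fin 4)) (i j : Fin 4) : ℝ :=
  ∫ x in (Jw (w ++ [i]) ∪ Jw (w ++ [j])),
    ‖x - ctr P (Jw (w ++ [i]) ∪ Jw (w ++ [j]))‖^2 ∂P

/-!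
Self-affinity traps the mass of `P`: each `S i` maps the ball of radius `1 + 3 r` about the
centre of the unit square into the ball of radius `1 + r`, so all these balls carry the same mass,
and letting `r → ∞` shows that `P` lives on a bounded set; in particular it has finite second
moments.

Integrating the self-affinity equation against `x` and using `S i x = x / 3 + S i 0`, the mean
satisfies `m = m / 3 + ∑ pᵢ S i 0`, so `m = (1/2, 3/4)`. The parallel axis theorem
`∫ ‖x - c‖² dP = V + ‖m - c‖²`, with `V` the variance, applied to
`S i x - m = (x - 3 (m - S i 0)) / 3` gives
`V = V / 9 + ∑ pᵢ ‖3 S i 0 - 2 m‖² / 9 = V / 9 + 7 / 36`, so `V = 7 / 32`; the theorem is the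
parallel axis theorem once more.
-/

open Set Metric

section SelfSimilarMeasure

variable {X ι : Type*} [MeasurableSpace X] [Fintype ι]

theorem measure_le_of_eq_sum_map_of_mapsTo {μ : Measure X} {w : ι → ℝ≥0∞} {f : ι → X → X}
    (hμ : μ = ∑ i, w i • μ.map (f i)) (hw : ∑ i, w i = 1) (hf : ∀ i, AEMeasurable (f i) μ)
    {A B : Set X} (hAB : ∀ i, MapsTo (f i) A B) : μ A ≤ μ B :=
  calc μ A = ∑ i, w i * μ A := by rw [← Finset.sum_mul, hw, one_mul]
    _ ≤ ∑ i, w i * μ.map (f i) B := by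
      refine Finset.sum_le_sum fun i _ => mul_le_mul_right ?_ _
      exact (measure_mono (hAB i).subset_preimage).trans (Measure.le_map_apply (hf i) B)
    _ = μ B := by
      conv_rhs => rw [hμ]
      simp only [Measure.coe_finsetSum, Finset.sum_apply, Measure.smul_apply, smul_eq_mul]

theorem integral_eq_sum_integral_comp_of_eq_sum_map {E : Type*} [NormedAddCommGroup E]
    [NormedSpace ℝ E] {μ : Measure X} {w : ι → ℝ≥0∞} {f : ι → X → X}
    (hμ : μ = ∑ i, w i • μ.map (f i)) (hf : ∀ i, AEMeasurable (f i) μ) {g : X → E}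
    (hgm : StronglyMeasurable g) (hg : Integrable g μ) :
    ∫ x, g x ∂μ = ∑ i, (w i).toReal • ∫ x, g (f i x) ∂μ := by
  have hgi : ∀ i ∈ Finset.univ, Integrable g (w i • μ.map (f i)) := by
    rw [hμ] at hg
    exact integrable_finsetSum_measure.mp hg
  conv_lhs => rw [hμ]
  rw [integral_finsetSum_measure hgi]
  simp only [integral_smul_measure, integral_map (hf _) hgm.aestronglyMeasurable]

theorem Monotone.prob_zero_eq_one {μ : Measure X} [IsProbabilityMeasure μ] {A : ℕ → Set X}
    (hA : Monotone A) (hU : ⋃ n, A n = univ) (hμA : Antitone (μ ∘ A)) : μ (A 0) = 1 := by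
  refine le_antisymm prob_le_one ?_
  calc 1 = μ (⋃ n, A n) := by rw [hU, measure_univ]
    _ = ⨆ n, μ (A n) := hA.measure_iUnion
    _ ≤ μ (A 0) := iSup_le fun n => hμA (Nat.zero_le n)

end SelfSimilarMeasure

theorem integral_norm_sub_sq {E : Type*} [NormedAddCommGroup E] [InnerProductSpace ℝ E]
    [CompleteSpace E] [MeasurableSpace E] [BorelSpace E] {μ : Measure E} [IsProbabilityMeasure μ]
    (h : MemLp id 2 μ) (c : E) :
    ∫ x, ‖x - c‖ ^ 2 ∂μ = ∫ x, ‖x - ∫ y, y ∂μ‖ ^ 2 ∂μ + ‖(∫ y, y ∂μ) - c‖ ^ 2 := by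
  set m := ∫ y, y ∂μ
  have hid : Integrable (fun x : E => x) μ := h.integrable one_le_two
  have hcen : Integrable (fun x => x - m) μ := hid.sub (integrable_const m)
  have hsq : Integrable (fun x => ‖x - m‖ ^ 2) μ :=
    (h.sub (memLp_const m)).integrable_norm_pow two_ne_zero
  have hinner : Integrable (fun x => 2 * inner ℝ (m - c) (x - m)) μ :=
    (hcen.const_inner (m - c)).const_mul 2
  have hsum : Integrable (fun x => ‖x - m‖ ^ 2 + 2 * inner ℝ (m - c) (x - m)) μ :=
    hsq.add hinner
  have hcross : ∫ x, 2 * inner ℝ (m - c) (x - m) ∂μ = 0 := by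
    rw [integral_const_mul, integral_inner hcen, integral_sub hid (integrable_const m)]
    simp [m]
  calc ∫ x, ‖x - c‖ ^ 2 ∂μ
      = ∫ x, ‖x - m‖ ^ 2 + 2 * inner ℝ (m - c) (x - m) + ‖m - c‖ ^ 2 ∂μ := by
        congr 1 with x
        rw [← sub_add_sub_cancel x m c, norm_add_sq_real, real_inner_comm]
    _ = ∫ x, ‖x - m‖ ^ 2 ∂μ + ‖m - c‖ ^ 2 := by
        rw [integral_add hsum (integrable_const _), integral_add hsq hinner,
          hcross, integral_const]
        simp

theorem norm_sq_E2 (y : E2) : ‖y‖ ^ 2 = y 0 ^ 2 + y 1 ^ 2 := by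
  simp [EuclideanSpace.norm_sq_eq, Fin.sum_univ_two]

theorem S_apply (i : Fin 4) (x : E2) : S i x = (3 : ℝ)⁻¹ • x + S i 0 := by
  fin_cases i <;> ext j <;> fin_cases j <;> simp [S, pt] <;> ring

theorem continuous_S (i : Fin 4) : Continuous (S i) := by
  rw [funext (S_apply i)]
  fun_prop

theorem dist_S_S (i : Fin 4) (x y : E2) : dist (S i x) (S i y) = dist x y / 3 := by
  rw [S_apply i x, S_apply i y, dist_add_right, dist_smul₀]
  norm_num
  ring

theorem dist_S_center_le (i : Fin 4) : dist (S i (pt (1/2) (1/2))) (pt (1/2) (1/2)) ≤ 2 / 3 := by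
  rw [dist_eq_norm, ← sq_le_sq₀ (norm_nonneg _) (by norm_num), norm_sq_E2]
  fin_cases i <;> simp [S, pt] <;> norm_num

theorem mapsTo_S_closedBall (i : Fin 4) (r : ℝ) :
    MapsTo (S i) (closedBall (pt (1/2) (1/2)) (1 + 3 * r)) (closedBall (pt (1/2) (1/2)) (1 + r)) :=
  fun x hx => calc
    dist (S i x) (pt (1/2) (1/2))
      ≤ dist (S i x) (S i (pt (1/2) (1/2))) + dist (S i (pt (1/2) (1/2))) (pt (1/2) (1/2)) :=
        dist_triangle _ _ _
    _ ≤ (1 + 3 * r) / 3 + 2 / 3 := by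
        rw [dist_S_S]
        gcongr
        · exact hx
        · exact dist_S_center_le i
    _ ≤ 1 + r := by linarith

def carpetWeight : Fin 4 → ℝ≥0∞ := ![1/8, 1/8, 3/8, 3/8]

theorem sum_carpetWeight : ∑ i, carpetWeight i = 1 := by
  rw [Fin.sum_univ_four]
  change (1 / 8 : ℝ≥0∞) + 1 / 8 + 3 / 8 + 3 / 8 = 1
  rw [ENNReal.div_add_div_same, ENNReal.div_add_div_same, ENNReal.div_add_div_same]
  norm_num
  exact ENNReal.div_self (by norm_num) (by norm_num)

namespace carpetEq

variable {P : Measure E2}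

theorem eq_sum_map (hP : carpetEq P) : P = ∑ i, carpetWeight i • P.map (S i) := by
  rw [Fin.sum_univ_four]
  exact hP

theorem measure_closedBall (hP : carpetEq P) [IsProbabilityMeasure P] :
    P (closedBall (pt (1/2) (1/2)) 2) = 1 := by
  have hstep : ∀ n : ℕ, P (closedBall (pt (1/2) (1/2)) (1 + 3 ^ (n + 1)))
      ≤ P (closedBall (pt (1/2) (1/2)) (1 + 3 ^ n)) := fun n => by
    rw [pow_succ']
    exact measure_le_of_eq_sum_map_of_mapsTo hP.eq_sum_map sum_carpetWeight
      (fun i => (continuous_S i).aemeasurable) (fun i => mapsTo_S_closedBall i _)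
  have hmono : Monotone fun n : ℕ => closedBall (pt (1/2) (1/2)) (1 + 3 ^ n) := fun m n hmn =>
    closedBall_subset_closedBall (by gcongr; norm_num)
  have hU : ⋃ n : ℕ, closedBall (pt (1/2) (1/2)) (1 + 3 ^ n) = univ := by
    refine eq_univ_of_forall fun x => mem_iUnion.2 ?_
    obtain ⟨n, hn⟩ := pow_unbounded_of_one_lt (dist x (pt (1/2) (1/2))) (by norm_num : (1:ℝ) < 3)
    exact ⟨n, by rw [mem_closedBall]; linarith⟩
  simpa [one_add_one_eq_two] using hmono.prob_zero_eq_one hU (antitone_nat_of_succ_le hstep)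

theorem integrable_of_continuous (hP : carpetEq P) [IsProbabilityMeasure P]
    {F : Type*} [NormedAddCommGroup F] {g : E2 → F} (hg : Continuous g) : Integrable g P := by
  have hae : ∀ᵐ x ∂P, x ∈ closedBall (pt (1/2) (1/2)) 2 :=
    (mem_ae_iff_prob_eq_one measurableSet_closedBall).2 hP.measure_closedBall
  rw [← Measure.restrict_eq_self_of_ae_mem hae]
  exact hg.continuousOn.integrableOn_compact (isCompact_closedBall _ _)

theorem memLp_id (hP : carpetEq P) [IsProbabilityMeasure P] : MemLp id 2 P :=
  (memLp_two_iff_integrable_sq_norm continuous_id.aestronglyMeasurable).2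
    (hP.integrable_of_continuous (by fun_prop))

theorem integral_eq_sum (hP : carpetEq P) [IsProbabilityMeasure P]
    {F : Type*} [NormedAddCommGroup F] [NormedSpace ℝ F] {g : E2 → F} (hg : Continuous g) :
    ∫ x, g x ∂P = ∑ i, (carpetWeight i).toReal • ∫ x, g (S i x) ∂P :=
  integral_eq_sum_integral_comp_of_eq_sum_map hP.eq_sum_map
    (fun i => (continuous_S i).aemeasurable) hg.stronglyMeasurable
    (hP.integrable_of_continuous hg)

theorem integral_id (hP : carpetEq P) [IsProbabilityMeasure P] :
    ∫ x, x ∂P = pt (1/2) (3/4) := by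
  have hint : Integrable (fun x : E2 => x) P := hP.integrable_of_continuous continuous_id
  have hS : ∀ i, ∫ x, S i x ∂P = (3 : ℝ)⁻¹ • ∫ x, x ∂P + S i 0 := fun i => by
    have h3 : Integrable (fun x : E2 => (3 : ℝ)⁻¹ • x) P := hint.smul (3 : ℝ)⁻¹
    rw [integral_congr_ae (ae_of_all _ (S_apply i)), integral_add h3 (integrable_const _),
      integral_smul, integral_const]
    simp
  have h := hP.integral_eq_sum continuous_id'
  simp only [hS] at h
  ext j
  have hj := congrArg (· j) h
  fin_cases j <;> simp [Fin.sum_univ_four, carpetWeight, S, pt] at hj ⊢ <;> linarith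

theorem integral_norm_sub_mean_sq (hP : carpetEq P) [IsProbabilityMeasure P] :
    ∫ x, ‖x - pt (1/2) (3/4)‖ ^ 2 ∂P = 7 / 32 := by
  have hS : ∀ i x, ‖S i x - pt (1/2) (3/4)‖ ^ 2
      = 9⁻¹ * ‖x - (3 : ℝ) • (pt (1/2) (3/4) - S i 0)‖ ^ 2 := fun i x => by
    rw [S_apply, show (3 : ℝ)⁻¹ • x + S i 0 - pt (1/2) (3/4)
      = (3 : ℝ)⁻¹ • (x - (3 : ℝ) • (pt (1/2) (3/4) - S i 0)) by module, norm_smul, mul_pow]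
    norm_num
  have hc : ∀ i, ∫ x, ‖x - (3 : ℝ) • (pt (1/2) (3/4) - S i 0)‖ ^ 2 ∂P
      = ∫ x, ‖x - pt (1/2) (3/4)‖ ^ 2 ∂P
        + ‖pt (1/2) (3/4) - (3 : ℝ) • (pt (1/2) (3/4) - S i 0)‖ ^ 2 :=
    fun i => by rw [integral_norm_sub_sq hP.memLp_id, hP.integral_id]
  have h := hP.integral_eq_sum (g := fun x => ‖x - pt (1/2) (3/4)‖ ^ 2) (by fun_prop)
  simp only [hS, integral_const_mul, hc] at h
  generalize ∫ x, ‖x - pt (1/2) (3/4)‖ ^ 2 ∂P = V at h ⊢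
  simp only [Fin.sum_univ_four, norm_sq_E2] at h
  simp [carpetWeight, S, pt] at h
  linarith

end carpetEq

theorem distortion_about_point (P : Measure E2) [IsProbabilityMeasure P] (hP : carpetEq P) :
    ∀ a b : ℝ, ∫ x : E2, ‖x - pt a b‖^2 ∂P = 7/32 + ‖pt (1/2) (3/4) - pt a b‖^2 := by
  intro a b
  rw [integral_norm_sub_sq hP.memLp_id, hP.integral_id, hP.integral_norm_sub_mean_sq]
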